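/- arXiv:2203.01722 — 2 statements merged into one kernel-verified Lean document; each statement's English description precedes it below -/
import Mathlib

section
/- Let Q̂_1,…,Q̂_n with Q̂_i ∈ ℝ^{k_i × k}, k = ∏ k_i. The following are equivalent for a given probability vector p ∈ ℝ^k: (i) (Q̂_1 * ⋯ * Q̂_n) p = (Q̂_1 p) ⊗ ⋯ ⊗ (Q̂_n p); (ii) H R_k^{(n)} p = H p^{⊗ n}, where H := ∏_{i=1}^n (I_{k^{i-1}} ⊗ Q̂_i) and R_k^{(n)} has columns (δ_k^j)^{⊗ n}. -/
open Matrix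

noncomputable section

/-- A probability vector: nonnegative entries summing to `1`. -/
def ProbVec {m : Type*} [Fintype m] (p : m → ℝ) : Prop :=
  (∀ i, 0 ≤ p i) ∧ ∑ i, p i = 1

/-- Iterated Khatri–Rao product of `Q̂ i ∈ ℝ^{k_i × k}` (`k = ∏ k_i`, realized as the
index set `K = ∏ i, Fin (k i)`). -/
def KRn {n : ℕ} {k : Fin n → ℕ}
    (Q : ∀ i, Matrix (Fin (k i)) (∀ i, Fin (k i)) ℝ) :
    Matrix (∀ i, Fin (k i)) (∀ i, Fin (k i)) ℝ :=
  Matrix.of fun g j => ∏ i, Q i (g i) j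

/-- The matrix `H = ∏_{i=1}^n (I_{k^{i-1}} ⊗ Q̂_i)` in closed form. -/
def Hmat {n : ℕ} {k : Fin n → ℕ}
    (Q : ∀ i, Matrix (Fin (k i)) (∀ i, Fin (k i)) ℝ) :
    Matrix (∀ i, Fin (k i)) (Fin n → (∀ i, Fin (k i))) ℝ :=
  Matrix.of fun g f => ∏ i, Q i (g i) (f i)

/-- The matrix `R_k^{(n)}` whose `j`-th column is `(δ_k^j)^{⊗ n}`. -/
def Rkn (n : ℕ) (k : Fin n → ℕ) :
    Matrix (Fin n → (∀ i, Fin (k i))) (∀ i, Fin (k i)) ℝ :=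
  Matrix.of fun f j => ∏ _i : Fin n, (if f _i = j then (1 : ℝ) else 0)

/-
`R_k^{(n)}` picks out the diagonal `f = (j, …, j)`, on which `H` reduces to the Khatri–Rao
product, so `H R_k^{(n)} = Q̂_1 * ⋯ * Q̂_n`. On the other side, `H p^{⊗ n}` at `g` is a sum of
products over `f`, which factors as `∏ i, (Q̂_i p)_{g i}` by distributivity. Hence (i) and (ii)
have the same left-hand and the same right-hand sides.
-/

theorem Rkn_apply {n : ℕ} {k : Fin n → ℕ} (f : Fin n → ∀ i, Fin (k i)) (j : ∀ i, Fin (k i)) :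
    Rkn n k f j = if f = fun _ => j then 1 else 0 := by
  simp only [Rkn, of_apply, Finset.prod_boole, funext_iff, Finset.mem_univ, true_implies]

theorem Hmat_mul_Rkn {n : ℕ} {k : Fin n → ℕ} (Q : ∀ i, Matrix (Fin (k i)) (∀ i, Fin (k i)) ℝ) :
    Hmat Q * Rkn n k = KRn Q := by
  ext g j
  simp only [mul_apply, Rkn_apply, mul_ite, mul_one, mul_zero, Finset.sum_ite_eq',
    Finset.mem_univ, if_true, Hmat, KRn, of_apply]

theorem Hmat_mulVec_prod {n : ℕ} {k : Fin n → ℕ}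
    (Q : ∀ i, Matrix (Fin (k i)) (∀ i, Fin (k i)) ℝ) (p : (∀ i, Fin (k i)) → ℝ) :
    (Hmat Q).mulVec (fun f : Fin n → (∀ i, Fin (k i)) => ∏ i, p (f i)) =
      fun g => ∏ i, (Q i).mulVec p (g i) := by
  funext g
  simp only [mulVec, dotProduct, Hmat, of_apply, Finset.prod_univ_sum, Fintype.piFinset_univ,
    Finset.prod_mul_distrib]

theorem consistency_iff_general (n : ℕ) (k : Fin n → ℕ)
    (Q : ∀ i, Matrix (Fin (k i)) (∀ i, Fin (k i)) ℝ)
    (p : (∀ i, Fin (k i)) → ℝ) :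
    ((KRn Q).mulVec p = fun g => ∏ i, ((Q i).mulVec p) (g i)) ↔
      (Hmat Q * Rkn n k).mulVec p =
        (Hmat Q).mulVec (fun f : Fin n → (∀ i, Fin (k i)) => ∏ i, p (f i)) := by
  rw [Hmat_mul_Rkn, Hmat_mulVec_prod]

/-- **Consistency condition.**  For a probability vector `p ∈ ℝ^k` the following are
equivalent: (i) `(Q̂_1 * ⋯ * Q̂_n) p = (Q̂_1 p) ⊗ ⋯ ⊗ (Q̂_n p)`;
(ii) `H R_k^{(n)} p = H p^{⊗ n}`. -/
theorem consistency_iff (n : ℕ) (k : Fin n → ℕ)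
    (Q : ∀ i, Matrix (Fin (k i)) (∀ i, Fin (k i)) ℝ)
    (p : (∀ i, Fin (k i)) → ℝ) (hp : ProbVec p) :
    ((KRn Q).mulVec p = fun g => ∏ i, ((Q i).mulVec p) (g i)) ↔
      (Hmat Q * Rkn n k).mulVec p =
        (Hmat Q).mulVec (fun f : Fin n → (∀ i, Fin (k i)) => ∏ i, p (f i)) :=
  consistency_iff_general n k Q p
end
end

section
/- Let Q̂_1,…,Q̂_n be column-stochastic matrices with Q̂_i ∈ ℝ^{k_i × k}, k = ∏ k_i. Suppose that n−1 of them are constant-column, i.e., there exist probability vectors v_{i_1},…,v_{i_{n-1}} with Q̂_{i_j} = 1_k^T ⊗ v_{i_j} (every column of Q̂_{i_j} equals v_{i_j}). Then for every probability vector p ∈ ℝ^k, (Q̂_1 * ⋯ * Q̂_n) p = (Q̂_1 p) ⊗ ⋯ ⊗ (Q̂_n p). -/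
open Matrix Finset

noncomputable section

/-- A column-stochastic matrix: all columns are probability vectors. -/
def ColStochastic {m n : Type*} [Fintype m] (A : Matrix m n ℝ) : Prop :=
  (∀ r j, 0 ≤ A r j) ∧ ∀ j, ∑ r, A r j = 1

/-!
Row `g` of the Khatri–Rao product is the entrywise product of the rows `Q̂_i (g i)`. A row of a
constant-column matrix is a constant vector, and against a vector `p` with entry sum `1` it
pairs to that constant. So all factors but the `i₀`-th pull out of the pairing with `p`, each
one equal to its own pairing with `p`, which is the corresponding factor of the right-hand side.
-/

theorem mulVec_eq_of_forall_apply_eq {m n R : Type*} [Fintype n] [Semiring R]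
    {A : Matrix m n R} {v : m → R} (hA : ∀ a j, A a j = v a) {p : n → R}
    (hp : ∑ j, p j = 1) : A *ᵥ p = v := by
  funext a
  simp only [mulVec, dotProduct, hA, ← mul_sum, hp, mul_one]

theorem prod_dotProduct_of_forall_ne_eq_const {ι κ R : Type*} [Fintype ι] [Fintype κ]
    [CommSemiring R] {f : ι → κ → R} {p : κ → R} (i₀ : ι)
    (hf : ∀ i ≠ i₀, f i = fun _ => f i ⬝ᵥ p) :
    (fun j => ∏ i, f i j) ⬝ᵥ p = ∏ i, f i ⬝ᵥ p := by
  classical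
  have hsplit : (fun j => ∏ i, f i j) = (∏ i ∈ univ.erase i₀, f i ⬝ᵥ p) • f i₀ := by
    funext j
    rw [← mul_prod_erase _ _ (mem_univ i₀), Pi.smul_apply, smul_eq_mul, mul_comm]
    congr 1
    exact prod_congr rfl fun i hi => congrFun (hf i (ne_of_mem_erase hi)) j
  rw [hsplit, smul_dotProduct, smul_eq_mul, mul_comm]
  exact mul_prod_erase _ (fun i => f i ⬝ᵥ p) (mem_univ i₀)

theorem consistency_of_constant_columns_general (n : ℕ) (k : Fin n → ℕ)
    (Q : ∀ i, Matrix (Fin (k i)) (∀ i, Fin (k i)) ℝ)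
    (hconst : ∃ i₀ : Fin n, ∀ i, i ≠ i₀ →
      ∃ v : Fin (k i) → ℝ, ProbVec v ∧ ∀ a j, Q i a j = v a)
    (p : (∀ i, Fin (k i)) → ℝ) (hp : ProbVec p) :
    (KRn Q).mulVec p = fun g => ∏ i, ((Q i).mulVec p) (g i) := by
  obtain ⟨i₀, hconst⟩ := hconst
  funext g
  refine prod_dotProduct_of_forall_ne_eq_const (f := fun i => Q i (g i)) i₀ fun i hi => ?_
  obtain ⟨v, -, hv⟩ := hconst i hi
  funext j
  change Q i (g i) j = (Q i *ᵥ p) (g i)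
  rw [mulVec_eq_of_forall_apply_eq hv hp.2, hv]

/-- **Sufficient consistency condition.**  If the `Q̂_i` are column-stochastic and
`n−1` of them are constant-column (each column of `Q̂_{i_j}` equals a fixed probability
vector `v_{i_j}`, i.e. `Q̂_{i_j} = 1_kᵀ ⊗ v_{i_j}`), then for every probability vector
`p`, `(Q̂_1 * ⋯ * Q̂_n) p = (Q̂_1 p) ⊗ ⋯ ⊗ (Q̂_n p)`. -/
theorem consistency_of_constant_columns (n : ℕ) (k : Fin n → ℕ)
    (Q : ∀ i, Matrix (Fin (k i)) (∀ i, Fin (k i)) ℝ)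
    (hQ : ∀ i, ColStochastic (Q i))
    (hconst : ∃ i₀ : Fin n, ∀ i, i ≠ i₀ →
      ∃ v : Fin (k i) → ℝ, ProbVec v ∧ ∀ a j, Q i a j = v a)
    (p : (∀ i, Fin (k i)) → ℝ) (hp : ProbVec p) :
    (KRn Q).mulVec p = fun g => ∏ i, ((Q i).mulVec p) (g i) :=
  consistency_of_constant_columns_general n k Q hconst p hp
end
end
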